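/- arXiv:2502.07248 — 12 statements merged into one kernel-verified Lean document; each statement's English description precedes it below -/
import Mathlib

section
/- Let G be a finite simple graph and let D be any dominating set of G. Then there exists a proper coloring c of G such that D is an up-color dominating c-set of G. -/
/-!
Number the vertices injectively by `0, …, n - 1` and shift the numbers of the vertices of `D` up
by `n + 1`. The result is injective, hence proper, every vertex of `D` gets a positive color, and
every vertex outside `D` has a smaller color than each of its dominators.
-/

/-- `D` is an up-color dominating `c`-set of `G`. -/
def IsUCDomSet {V : Type*} (G : SimpleGraph V) (c : V → ℕ) (D : Finset V) : Prop :=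
  (∀ v ∉ D, ∃ d ∈ D, G.Adj v d ∧ c v < c d) ∧ ∀ d ∈ D, 1 ≤ c d

/-- `D` is a dominating set of `G`. -/
def IsDomSet {V : Type*} (G : SimpleGraph V) (D : Finset V) : Prop :=
  ∀ v ∉ D, ∃ d ∈ D, G.Adj v d

section ShiftOn

variable {V : Type*} [DecidableEq V] (D : Finset V) (N : ℕ) (f : V → ℕ)

def shiftOn (v : V) : ℕ :=
  if v ∈ D then f v + N + 1 else f v

variable {D N f}

theorem shiftOn_of_mem {v : V} (hv : v ∈ D) : shiftOn D N f v = f v + N + 1 := if_pos hv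

theorem shiftOn_of_notMem {v : V} (hv : v ∉ D) : shiftOn D N f v = f v := if_neg hv

theorem one_le_shiftOn_of_mem {d : V} (hd : d ∈ D) : 1 ≤ shiftOn D N f d := by
  rw [shiftOn_of_mem hd]
  omega

theorem shiftOn_lt_shiftOn (hf : ∀ v, f v ≤ N) {v d : V} (hv : v ∉ D) (hd : d ∈ D) :
    shiftOn D N f v < shiftOn D N f d := by
  rw [shiftOn_of_notMem hv, shiftOn_of_mem hd]
  have := hf v
  omega

theorem shiftOn_injective (hinj : Function.Injective f) (hf : ∀ v, f v ≤ N) :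
    Function.Injective (shiftOn D N f) := by
  intro u v huv
  by_cases hu : u ∈ D <;> by_cases hv : v ∈ D
  · rw [shiftOn_of_mem hu, shiftOn_of_mem hv] at huv
    exact hinj (by omega)
  · exact absurd huv (shiftOn_lt_shiftOn hf hv hu).ne'
  · exact absurd huv (shiftOn_lt_shiftOn hf hu hv).ne
  · rw [shiftOn_of_notMem hu, shiftOn_of_notMem hv] at huv
    exact hinj huv

theorem isUCDomSet_shiftOn {G : SimpleGraph V} (hD : IsDomSet G D) (hf : ∀ v, f v ≤ N) :
    IsUCDomSet G (shiftOn D N f) D := by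
  refine ⟨fun v hv => ?_, fun d hd => one_le_shiftOn_of_mem hd⟩
  obtain ⟨d, hd, hadj⟩ := hD v hv
  exact ⟨d, hd, hadj, shiftOn_lt_shiftOn hf hv hd⟩

end ShiftOn

theorem stmt_2 {V : Type*} [Fintype V] (G : SimpleGraph V)
    (D : Finset V) (hD : IsDomSet G D) :
    ∃ c : V → ℕ, (∀ ⦃u v⦄, G.Adj u v → c u ≠ c v) ∧ IsUCDomSet G c D := by
  classical
  let index : V → ℕ := fun v => Fintype.equivFin V v
  have index_injective : Function.Injective index :=
    Fin.val_injective.comp (Fintype.equivFin V).injective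
  have index_le : ∀ v, index v ≤ Fintype.card V := fun v => (Fintype.equivFin V v).isLt.le
  refine ⟨shiftOn D (Fintype.card V) index, fun u v hadj => ?_, isUCDomSet_shiftOn hD index_le⟩
  exact (shiftOn_injective index_injective index_le).ne (G.ne_of_adj hadj)
end

section
/- For every finite simple graph G with at least one vertex there exists a proper coloring c of G such that the minimum cardinality of an up-color dominating c-set of G equals the domination number γ(G); that is, there exists an up-color dominating c-set of size γ(G), and every up-color dominating c-set has size at least γ(G). -/
/-- The domination number of `G`. -/
noncomputable def domNum (V : Type*) [Fintype V] (G : SimpleGraph V) : ℕ :=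
  sInf {n | ∃ D : Finset V, IsDomSet G D ∧ D.card = n}

/-!
Take a minimum dominating set `D₀` and colour the vertices injectively so that every vertex of
`D₀` gets a larger positive colour than every vertex outside `D₀`. Then `D₀` is an up-color
dominating set, and every up-color dominating set is in particular dominating, so has at least
`γ(G)` elements.
-/

section

variable {V : Type*} {G : SimpleGraph V}

theorem IsUCDomSet.isDomSet {c : V → ℕ} {D : Finset V} (hD : IsUCDomSet G c D) :
    IsDomSet G D := fun v hv =>
  (hD.1 v hv).imp fun _ ⟨hd, hadj, _⟩ => ⟨hd, hadj⟩

theorem IsDomSet.isUCDomSet {c : V → ℕ} {D : Finset V} (hD : IsDomSet G D)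
    (hpos : ∀ d ∈ D, 1 ≤ c d) (hlt : ∀ v ∉ D, ∀ d ∈ D, c v < c d) : IsUCDomSet G c D :=
  ⟨fun v hv => (hD v hv).imp fun d ⟨hd, hadj⟩ => ⟨hd, hadj, hlt v hv d hd⟩, hpos⟩

section domNum

variable [Fintype V]

theorem domNum_le_card {D : Finset V} (hD : IsDomSet G D) : domNum V G ≤ D.card :=
  Nat.sInf_le ⟨D, hD, rfl⟩

theorem exists_isDomSet_card_eq_domNum : ∃ D : Finset V, IsDomSet G D ∧ D.card = domNum V G :=
  Nat.sInf_mem (s := {n | ∃ D : Finset V, IsDomSet G D ∧ D.card = n})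
    ⟨_, Finset.univ, fun v hv => absurd (Finset.mem_univ v) hv, rfl⟩

end domNum

theorem Finset.exists_injective_pos_lt_of_notMem_of_mem [Fintype V] (s : Finset V) :
    ∃ c : V → ℕ, Function.Injective c ∧ (∀ v, 1 ≤ c v) ∧ ∀ v ∉ s, ∀ d ∈ s, c v < c d := by
  classical
  let e := Fintype.equivFin V
  have he : ∀ v, (e v : ℕ) < Fintype.card V := fun v => (e v).isLt
  -- shifting the colours of `s` by `card V` puts them above all other colours
  refine ⟨fun v => if v ∈ s then Fintype.card V + 1 + e v else 1 + e v, ?_, ?_, ?_⟩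
  · intro a b hab
    have hval : (e a : ℕ) = e b := by
      by_cases ha : a ∈ s <;> by_cases hb : b ∈ s <;> simp only [ha, hb, if_true, if_false] at hab
        <;> grind
    exact e.injective (Fin.ext hval)
  · intro v
    dsimp only
    split_ifs <;> omega
  · intro v hv d hd
    simp only [hv, hd, if_true, if_false]
    grind

end

theorem stmt_3_general {V : Type*} [Fintype V] (G : SimpleGraph V) :
    ∃ c : V → ℕ, (∀ ⦃u v⦄, G.Adj u v → c u ≠ c v) ∧
      (∃ D : Finset V, IsUCDomSet G c D ∧ D.card = domNum V G) ∧
      (∀ D : Finset V, IsUCDomSet G c D → domNum V G ≤ D.card) := by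
  obtain ⟨D₀, hD₀, hcard⟩ := exists_isDomSet_card_eq_domNum (G := G)
  obtain ⟨c, hinj, hpos, hlt⟩ := D₀.exists_injective_pos_lt_of_notMem_of_mem
  exact ⟨c, fun _ _ huv => hinj.ne (G.ne_of_adj huv),
    ⟨D₀, hD₀.isUCDomSet (fun d _ => hpos d) hlt, hcard⟩,
    fun _ hD => domNum_le_card hD.isDomSet⟩

theorem stmt_3 {V : Type*} [Fintype V] [Nonempty V] (G : SimpleGraph V) :
    ∃ c : V → ℕ, (∀ ⦃u v⦄, G.Adj u v → c u ≠ c v) ∧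
      (∃ D : Finset V, IsUCDomSet G c D ∧ D.card = domNum V G) ∧
      (∀ D : Finset V, IsUCDomSet G c D → domNum V G ≤ D.card) :=
  stmt_3_general G
end

section
/- Let P_n be the path graph on n vertices with n ≥ 2 and let c be any proper coloring of P_n. Then every up-color dominating c-set of P_n has at least ⌈n/3⌉ elements, and there exists an up-color dominating c-set of P_n with at most ⌈n/2⌉ elements. -/
/-- The path graph on `n` vertices: `vᵢ` is adjacent to `vᵢ₊₁`. -/
def pathGr (n : ℕ) : SimpleGraph (Fin n) :=
  SimpleGraph.fromRel (fun i j => (j : ℕ) = (i : ℕ) + 1)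

namespace SimpleGraph

variable {V : Type*} (G : SimpleGraph V)

theorem card_le_mul_card_of_dominating [Fintype V] [DecidableEq V] [DecidableRel G.Adj]
    {D : Finset V} (hD : ∀ v ∉ D, ∃ d ∈ D, G.Adj v d) :
    Fintype.card V ≤ (G.maxDegree + 1) * D.card := by
  have hcover : (Finset.univ : Finset V) ⊆ D.biUnion fun d => insert d (G.neighborFinset d) := by
    intro v _
    simp only [Finset.mem_biUnion, Finset.mem_insert, mem_neighborFinset]
    by_cases hv : v ∈ D
    · exact ⟨v, hv, Or.inl rfl⟩
    · obtain ⟨d, hd, hadj⟩ := hD v hv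
      exact ⟨d, hd, Or.inr hadj.symm⟩
  calc Fintype.card V
      ≤ ∑ d ∈ D, (insert d (G.neighborFinset d)).card :=
        (Finset.card_le_card hcover).trans Finset.card_biUnion_le
    _ ≤ ∑ _d ∈ D, (G.maxDegree + 1) := Finset.sum_le_sum fun d _ =>
        (Finset.card_insert_le _ _).trans (Nat.succ_le_succ (G.degree_le_maxDegree d))
    _ = (G.maxDegree + 1) * D.card := by rw [Finset.sum_const, smul_eq_mul, mul_comm]

theorem exists_isUCDomSet_card_le_of_edgeCover [DecidableEq V] {ι : Type*} [Fintype ι]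
    {c : V → ℕ} (a b : ι → V) (hadj : ∀ i, G.Adj (a i) (b i)) (hc : ∀ i, c (a i) ≠ c (b i))
    (hcover : ∀ v, ∃ i, v = a i ∨ v = b i) :
    ∃ D : Finset V, IsUCDomSet G c D ∧ D.card ≤ Fintype.card ι := by
  set top : ι → V := fun i => if c (a i) < c (b i) then b i else a i
  have htop_cases : ∀ i, (top i = b i ∧ c (a i) < c (b i)) ∨ (top i = a i ∧ c (b i) < c (a i)) := by
    intro i
    by_cases h : c (a i) < c (b i)
    · exact Or.inl ⟨if_pos h, h⟩
    · exact Or.inr ⟨if_neg h, by have := hc i; omega⟩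
  have htop_mem : ∀ i, top i ∈ Finset.univ.image top := fun i =>
    Finset.mem_image_of_mem _ (Finset.mem_univ i)
  refine ⟨Finset.univ.image top, ⟨?_, ?_⟩, Finset.card_image_le.trans_eq Finset.card_univ⟩
  · intro v hv
    obtain ⟨i, hi⟩ := hcover v
    have hv_ne : v ≠ top i := fun h => hv (h ▸ htop_mem i)
    refine ⟨top i, htop_mem i, ?_⟩
    rcases htop_cases i with ⟨ht, h⟩ | ⟨ht, h⟩ <;> rw [ht] at hv_ne ⊢ <;> rcases hi with rfl | rfl
    · exact ⟨hadj i, h⟩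
    · exact absurd rfl hv_ne
    · exact absurd rfl hv_ne
    · exact ⟨(hadj i).symm, h⟩
  · simp only [Finset.mem_image, Finset.mem_univ, true_and, forall_exists_index,
      forall_apply_eq_imp_iff]
    intro i
    rcases htop_cases i with ⟨ht, h⟩ | ⟨ht, h⟩ <;> rw [ht] <;> omega

end SimpleGraph

lemma pathGr_adj {n : ℕ} {u v : Fin n} :
    (pathGr n).Adj u v ↔ u ≠ v ∧ ((v : ℕ) = u + 1 ∨ (u : ℕ) = v + 1) := by
  simp [pathGr, SimpleGraph.fromRel_adj]

instance (n : ℕ) : DecidableRel (pathGr n).Adj := fun _ _ => decidable_of_iff _ pathGr_adj.symm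

lemma pathGr_maxDegree_le_two (n : ℕ) : (pathGr n).maxDegree ≤ 2 := by
  refine SimpleGraph.maxDegree_le_of_forall_degree_le _ _ fun v => ?_
  rw [← SimpleGraph.card_neighborFinset_eq_degree]
  calc ((pathGr n).neighborFinset v).card
      ≤ ({(v : ℕ) - 1, (v : ℕ) + 1} : Finset ℕ).card := by
        refine Finset.card_le_card_of_injOn Fin.val (fun w hw => ?_) Fin.val_injective.injOn
        rw [Finset.mem_coe, SimpleGraph.mem_neighborFinset, pathGr_adj] at hw
        simp only [Finset.coe_insert, Finset.coe_singleton, Set.mem_insert_iff,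
          Set.mem_singleton_iff]
        omega
    _ ≤ 2 := Finset.card_le_two

theorem stmt_6 (n : ℕ) (hn : 2 ≤ n)
    (c : Fin n → ℕ) (hc : ∀ ⦃u v⦄, (pathGr n).Adj u v → c u ≠ c v) :
    (∀ D : Finset (Fin n), IsUCDomSet (pathGr n) c D → (n + 2) / 3 ≤ D.card) ∧
      (∃ D : Finset (Fin n), IsUCDomSet (pathGr n) c D ∧ D.card ≤ (n + 1) / 2) := by
  constructor
  · intro D hD
    have hcard : n ≤ 3 * D.card := calc
      n = Fintype.card (Fin n) := (Fintype.card_fin n).symm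
      _ ≤ ((pathGr n).maxDegree + 1) * D.card := (pathGr n).card_le_mul_card_of_dominating
        fun v hv => (hD.1 v hv).imp fun _ ⟨hd, hadj, _⟩ => ⟨hd, hadj⟩
      _ ≤ 3 * D.card := Nat.mul_le_mul_right _ (Nat.succ_le_succ (pathGr_maxDegree_le_two n))
    omega
  · let a : Fin ((n + 1) / 2) → Fin n := fun k => ⟨min (2 * (k : ℕ)) (n - 2), by omega⟩
    let b : Fin ((n + 1) / 2) → Fin n := fun k => ⟨min (2 * (k : ℕ)) (n - 2) + 1, by omega⟩
    have hadj : ∀ k, (pathGr n).Adj (a k) (b k) := fun k =>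
      pathGr_adj.2 ⟨by simp [a, b, Fin.ext_iff], Or.inl rfl⟩
    have hcover : ∀ v, ∃ k, v = a k ∨ v = b k := fun v =>
      ⟨⟨v / 2, by omega⟩, by simp only [a, b, Fin.ext_iff]; omega⟩
    simpa using (pathGr n).exists_isUCDomSet_card_le_of_edgeCover a b hadj
      (fun k => hc (hadj k)) hcover
end

section
/- Let C_n be the cycle graph on n vertices with n ≥ 3 and let c be any proper coloring of C_n. Then every up-color dominating c-set of C_n has at least ⌈n/3⌉ elements, and there exists an up-color dominating c-set of C_n with at most ⌊n/2⌋ elements. -/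
/-- The cycle graph on `n` vertices: `vᵢ` is adjacent to `v_{(i+1) mod n}`. -/
def cycleGr (n : ℕ) : SimpleGraph (Fin n) :=
  SimpleGraph.fromRel (fun i j => (j : ℕ) = ((i : ℕ) + 1) % n)

private lemma ucd_val_one (n : ℕ) [NeZero n] (hn : 3 ≤ n) : ((1 : Fin n) : ℕ) = 1 := by
  rw [Fin.val_one']; exact Nat.mod_eq_of_lt (by omega)

private lemma ucd_adj_succ (n : ℕ) [NeZero n] (hn : 3 ≤ n) (u : Fin n) :
    (cycleGr n).Adj u (u + 1) := by
  have h1 := ucd_val_one n hn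
  have hv : ((u + 1 : Fin n) : ℕ) = ((u : ℕ) + 1) % n := by rw [Fin.add_def, h1]
  refine ⟨fun h => ?_, Or.inl hv⟩
  have h2 := congrArg Fin.val h
  rw [hv] at h2
  have hu := u.isLt
  rcases Nat.lt_or_ge ((u : ℕ) + 1) n with h' | h'
  · rw [Nat.mod_eq_of_lt h'] at h2; omega
  · have h3 : (u : ℕ) + 1 = n := by omega
    rw [h3, Nat.mod_self] at h2; omega

private lemma ucd_adj_cases (n : ℕ) [NeZero n] (hn : 3 ≤ n) {u v : Fin n}
    (h : (cycleGr n).Adj u v) : v = u + 1 ∨ u = v + 1 := by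
  have h1 := ucd_val_one n hn
  rcases h.2 with h2 | h2
  · left; apply Fin.ext; rw [Fin.add_def, h1]; exact h2
  · right; apply Fin.ext; rw [Fin.add_def, h1]; exact h2

open Fin.CommRing in
theorem stmt_8 (n : ℕ) (hn : 3 ≤ n)
    (c : Fin n → ℕ) (hc : ∀ ⦃u v⦄, (cycleGr n).Adj u v → c u ≠ c v) :
    (∀ D : Finset (Fin n), IsUCDomSet (cycleGr n) c D → (n + 2) / 3 ≤ D.card) ∧
      (∃ D : Finset (Fin n), IsUCDomSet (cycleGr n) c D ∧ D.card ≤ n / 2) := by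
  haveI : NeZero n := ⟨by omega⟩
  constructor
  · -- lower bound
    intro D hD
    have key : (Finset.univ : Finset (Fin n)) ⊆
        D.biUnion (fun d => ({d - 1, d, d + 1} : Finset (Fin n))) := by
      intro v _
      rw [Finset.mem_biUnion]
      by_cases hv : v ∈ D
      · exact ⟨v, hv, by simp⟩
      · obtain ⟨d, hd, hadj, _⟩ := hD.1 v hv
        refine ⟨d, hd, ?_⟩
        rcases ucd_adj_cases n hn hadj with h | h
        · have : v = d - 1 := by rw [h]; ring
          simp [this]
        · simp [h]
    have h1 : n ≤ (D.biUnion fun d => ({d - 1, d, d + 1} : Finset (Fin n))).card := by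
      have := Finset.card_le_card key
      simpa using this
    have h2 := Finset.card_biUnion_le (s := D)
      (t := fun d => ({d - 1, d, d + 1} : Finset (Fin n)))
    have h3 : ∑ d ∈ D, ({d - 1, d, d + 1} : Finset (Fin n)).card ≤ D.card * 3 := by
      apply Finset.sum_le_card_nsmul
      intro d _
      have ha := Finset.card_insert_le (d - 1) ({d, d + 1} : Finset (Fin n))
      have hb := Finset.card_insert_le d ({d + 1} : Finset (Fin n))
      simp only [Finset.card_singleton] at *
      omega
    omega
  · -- upper bound
    obtain ⟨m, hmax⟩ := Finite.exists_max c
    set vtx : ℕ → Fin n := fun t => m + (t : Fin n) with hvtx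
    have vtx_succ : ∀ t : ℕ, vtx (t + 1) = vtx t + 1 := by
      intro t; simp [hvtx]; ring
    have vtx_adj : ∀ t : ℕ, (cycleGr n).Adj (vtx t) (vtx (t + 1)) := by
      intro t; rw [vtx_succ]; exact ucd_adj_succ n hn _
    have vtx_zero : vtx 0 = m := by simp [hvtx]
    set pick : ℕ → Fin n := fun j =>
      if c (vtx (2 * j)) < c (vtx (2 * j + 1)) then vtx (2 * j + 1) else vtx (2 * j) with hpick
    set D : Finset (Fin n) := (Finset.range (n / 2)).image pick with hD
    have hmem : ∀ j < n / 2, pick j ∈ D := by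
      intro j hj
      exact Finset.mem_image_of_mem pick (Finset.mem_range.mpr hj)
    have pick0 : pick 0 = m := by
      rw [hpick]
      simp only
      rw [if_neg]
      · simpa using vtx_zero
      · push_neg
        simpa [vtx_zero] using hmax (vtx 1)
    refine ⟨D, ⟨?_, ?_⟩, ?_⟩
    · -- domination
      intro v hv
      have hvt : vtx ((v - m).val) = v := by
        simp [hvtx, Fin.cast_val_eq_self]
      set t := (v - m).val with htdef
      have ht : t < n := (v - m).isLt
      rcases Nat.lt_or_ge t (2 * (n / 2)) with hlt | hge
      · set j := t / 2 with hjdef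
        have hj : j < n / 2 := by omega
        have hne := hc (vtx_adj (2 * j))
        rcases Nat.even_or_odd t with he | ho
        · have ht2 : t = 2 * j := by rcases he with ⟨r, hr⟩; omega
          refine ⟨pick j, hmem j hj, ?_⟩
          rw [hpick]
          simp only
          split_ifs with h
          · rw [← hvt, ht2]
            exact ⟨vtx_adj (2 * j), h⟩
          · exfalso
            apply hv
            have : pick j = v := by rw [hpick]; simp only [if_neg h]; rw [← hvt, ht2]
            rw [← this]
            exact hmem j hj
        · have ht2 : t = 2 * j + 1 := by rcases ho with ⟨r, hr⟩; omega
          refine ⟨pick j, hmem j hj, ?_⟩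
          rw [hpick]
          simp only
          split_ifs with h
          · exfalso
            apply hv
            have : pick j = v := by rw [hpick]; simp only [if_pos h]; rw [← hvt, ht2]
            rw [← this]
            exact hmem j hj
          · rw [← hvt, ht2]
            refine ⟨(vtx_adj (2 * j)).symm, ?_⟩
            omega
      · -- leftover vertex (n odd): t = n - 1, dominated by m
        have htn : t = n - 1 := by omega
        have hm_mem : m ∈ D := by rw [← pick0]; exact hmem 0 (by omega)
        have hadj : (cycleGr n).Adj v m := by
          have h1 : vtx ((n - 1) + 1) = vtx (n - 1) + 1 := vtx_succ (n - 1)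
          have h2 : vtx ((n - 1) + 1) = m := by
            have : (n - 1) + 1 = n := by omega
            rw [this]
            simp [hvtx, Fin.natCast_self]
          rw [← hvt, htn, ← h2, h1]
          exact ucd_adj_succ n hn _
        exact ⟨m, hm_mem, hadj, lt_of_le_of_ne (hmax v) (hc hadj)⟩
    · -- colors ≥ 1
      intro d hd
      rw [hD] at hd
      obtain ⟨j, _, rfl⟩ := Finset.mem_image.mp hd
      have hne := hc (vtx_adj (2 * j))
      rw [hpick]
      simp only
      split_ifs with h
      · omega
      · omega
    · -- cardinality
      calc D.card ≤ (Finset.range (n / 2)).card := Finset.card_image_le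
        _ = n / 2 := Finset.card_range _
end

section
/- Let C_n be the cycle graph on n vertices with n ≥ 5. Then: (a) every proper coloring c of C_n that admits an up-color dominating c-set of size ⌈n/3⌉ (the domination number of C_n) uses at least 3 colors; and (b) there exists a proper coloring c of C_n using exactly 3 colors that admits an up-color dominating c-set of size ⌈n/3⌉. -/
lemma succ_mod (n a : ℕ) (h : a < n) :
    (a + 1) % n = if a + 1 = n then 0 else a + 1 := by
  split
  · simp [*]
  · exact Nat.mod_eq_of_lt (by omega)

lemma cyc_adj_iff {n : ℕ} (hn : 2 ≤ n) (u v : Fin n) :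
    (cycleGr n).Adj u v ↔
      ((v : ℕ) = ((u : ℕ) + 1) % n ∨ (u : ℕ) = ((v : ℕ) + 1) % n) := by
  rw [cycleGr, SimpleGraph.fromRel_adj]
  constructor
  · rintro ⟨-, h⟩; exact h
  · intro h
    refine ⟨?_, h⟩
    have h1 := succ_mod n u.val u.isLt
    have h2 := succ_mod n v.val v.isLt
    rw [Ne, Fin.ext_iff]
    rw [h1, h2] at h
    split_ifs at h <;> omega

lemma val_succ {n : ℕ} [NeZero n] (hn : 2 ≤ n) (v : Fin n) :
    ((v + 1 : Fin n) : ℕ) = ((v : ℕ) + 1) % n := by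
  have h1 : (1 : Fin n).val = 1 := by
    rw [Fin.val_one']; exact Nat.mod_eq_of_lt (by omega)
  rw [Fin.add_def]
  simp [h1]

/-- coloring of the cycle -/
def col (n : ℕ) (i : Fin n) : ℕ :=
  if (i : ℕ) = n - 1 ∧ n % 3 = 1 then 1
  else if (i : ℕ) = n - 1 ∧ n % 3 = 2 then 2
  else if (i : ℕ) = n - 2 ∧ n % 3 = 2 then 0
  else (i : ℕ) % 3

def gfin (n : ℕ) (hn : 5 ≤ n) (j : ℕ) : Fin n :=
  ⟨if j < n / 3 then 3 * j + 2 else n - 1, by split <;> omega⟩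

-- helper: adjacency from raw values
lemma cyc_adj_of {n : ℕ} (hn : 5 ≤ n) (a b : ℕ) (ha : a < n) (hb : b < n)
    (h : b = a + 1 ∨ a = b + 1 ∨ (a = 0 ∧ b = n - 1) ∨ (b = 0 ∧ a = n - 1)) :
    (cycleGr n).Adj ⟨a, ha⟩ ⟨b, hb⟩ := by
  rw [cyc_adj_iff (by omega)]
  simp only []
  rw [succ_mod n a ha, succ_mod n b hb]
  split_ifs <;> omega

lemma mem_D {n : ℕ} (hn : 5 ≤ n) (b : ℕ) (hb : b < n)
    (h : (b % 3 = 2 ∧ b < 3 * (n / 3)) ∨ (n % 3 ≠ 0 ∧ b = n - 1)) :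
    (⟨b, hb⟩ : Fin n) ∈ (Finset.range ((n + 2) / 3)).image (gfin n hn) := by
  rw [Finset.mem_image]
  rcases h with ⟨h1, h2⟩ | ⟨h1, h2⟩
  · refine ⟨b / 3, Finset.mem_range.2 (by omega), ?_⟩
    rw [gfin, Fin.ext_iff]
    simp only []
    split <;> omega
  · refine ⟨n / 3, Finset.mem_range.2 (by omega), ?_⟩
    rw [gfin, Fin.ext_iff]
    simp only []
    split <;> omega


theorem stmt_9 (n : ℕ) (hn : 5 ≤ n) :
    (∀ c : Fin n → ℕ, (∀ ⦃u v⦄, (cycleGr n).Adj u v → c u ≠ c v) →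
      (∃ D : Finset (Fin n), IsUCDomSet (cycleGr n) c D ∧ D.card = (n + 2) / 3) →
      3 ≤ (Finset.univ.image c).card) ∧
    (∃ c : Fin n → ℕ, (∀ ⦃u v⦄, (cycleGr n).Adj u v → c u ≠ c v) ∧
      (Finset.univ.image c).card = 3 ∧
      ∃ D : Finset (Fin n), IsUCDomSet (cycleGr n) c D ∧ D.card = (n + 2) / 3) := by
  constructor
  · intro c hc hE
    haveI : NeZero n := ⟨by omega⟩
    obtain ⟨D, hD, hcard⟩ := hE
    by_contra hlt
    push_neg at hlt
    have hne : (Finset.univ.image c).Nonempty :=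
      ⟨c ⟨0, by omega⟩, Finset.mem_image_of_mem c (Finset.mem_univ _)⟩
    set b := (Finset.univ.image c).max' hne with hb
    have hle : ∀ v : Fin n, c v ≤ b := fun v =>
      Finset.le_max' _ _ (Finset.mem_image_of_mem c (Finset.mem_univ v))
    -- adjacency of v and v+1
    have hadj : ∀ v : Fin n, (cycleGr n).Adj v (v + 1) := by
      intro v
      rw [cyc_adj_iff (by omega)]
      left
      exact val_succ (by omega) v
    -- every max-colored vertex is in D
    set S := Finset.univ.filter (fun v => c v = b) with hS
    have hSD : S ⊆ D := by
      intro v hv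
      rw [hS, Finset.mem_filter] at hv
      by_contra hvD
      obtain ⟨d, hd, -, hlt'⟩ := hD.1 v hvD
      have := hle d
      omega
    -- v or v+1 is max-colored
    have key2 : ∀ v : Fin n, c v = b ∨ c (v + 1) = b := by
      intro v
      by_contra hk
      push_neg at hk
      obtain ⟨h1, h2⟩ := hk
      have hne1 : c v ≠ c (v + 1) := hc (hadj v)
      have hsub : ({c v, c (v + 1), b} : Finset ℕ) ⊆ Finset.univ.image c := by
        intro x hx
        simp only [Finset.mem_insert, Finset.mem_singleton] at hx
        rcases hx with rfl | rfl | rfl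
        · exact Finset.mem_image_of_mem c (Finset.mem_univ _)
        · exact Finset.mem_image_of_mem c (Finset.mem_univ _)
        · exact (Finset.univ.image c).max'_mem hne
      have h3 : ({c v, c (v + 1), b} : Finset ℕ).card = 3 := by
        rw [Finset.card_insert_of_notMem (by simp; omega),
          Finset.card_insert_of_notMem (by simp; omega), Finset.card_singleton]
      have := Finset.card_le_card hsub
      omega
    set T := Finset.univ.filter (fun v => ¬ c v = b) with hT
    have hpart : S.card + T.card = n := by
      rw [hS, hT, Finset.card_filter_add_card_filter_not]
      simp
    have hTS : T.card ≤ S.card := by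
      apply Finset.card_le_card_of_injOn (fun v => v + 1)
      · intro v hv
        rw [hT, Finset.mem_coe, Finset.mem_filter] at hv
        rw [Finset.mem_coe, hS, Finset.mem_filter]
        refine ⟨Finset.mem_univ _, ?_⟩
        rcases key2 v with h | h
        · exact absurd h hv.2
        · exact h
      · exact (add_left_injective 1).injOn
    have hSD' := Finset.card_le_card hSD
    omega
  · have hkr := Nat.div_add_mod n 3
    have hr3 : n % 3 < 3 := Nat.mod_lt _ (by omega)
    refine ⟨col n, ?_, ?_, (Finset.range ((n + 2) / 3)).image (gfin n hn), ⟨?_, ?_⟩, ?_⟩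
    · -- proper
      intro u v huv
      rw [cyc_adj_iff (by omega)] at huv
      have hu := u.isLt
      have hv := v.isLt
      rw [succ_mod n u.val hu, succ_mod n v.val hv] at huv
      unfold col
      split_ifs at huv ⊢ <;> omega
    · -- exactly 3 colors
      have himg : Finset.univ.image (col n) = {0, 1, 2} := by
        apply Finset.Subset.antisymm
        · intro x hx
          rw [Finset.mem_image] at hx
          obtain ⟨i, -, rfl⟩ := hx
          have := i.isLt
          simp only [Finset.mem_insert, Finset.mem_singleton]
          unfold col
          split_ifs <;> omega
        · intro x hx
          simp only [Finset.mem_insert, Finset.mem_singleton] at hx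
          rw [Finset.mem_image]
          rcases hx with rfl | rfl | rfl
          · refine ⟨⟨0, by omega⟩, Finset.mem_univ _, ?_⟩
            have h0 : ((⟨0, by omega⟩ : Fin n) : ℕ) = 0 := rfl
            unfold col
            rw [h0]
            split_ifs <;> omega
          · refine ⟨⟨1, by omega⟩, Finset.mem_univ _, ?_⟩
            have h0 : ((⟨1, by omega⟩ : Fin n) : ℕ) = 1 := rfl
            unfold col
            rw [h0]
            split_ifs <;> omega
          · refine ⟨⟨2, by omega⟩, Finset.mem_univ _, ?_⟩
            have h0 : ((⟨2, by omega⟩ : Fin n) : ℕ) = 2 := rfl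
            unfold col
            rw [h0]
            split_ifs <;> omega
      rw [himg]
      decide
    · -- domination
      intro v hvD
      set a := (v : ℕ) with hav
      have ha : a < n := v.isLt
      have h1 : ¬(a % 3 = 2 ∧ a < 3 * (n / 3)) := by
        intro hcon
        exact hvD (by have := mem_D hn a ha (Or.inl hcon); rwa [Fin.eta] at this)
      have h2 : ¬(n % 3 ≠ 0 ∧ a = n - 1) := by
        intro hcon
        exact hvD (by have := mem_D hn a ha (Or.inr hcon); rwa [Fin.eta] at this)
      rcases (show a % 3 = 0 ∨ a % 3 = 1 ∨ a % 3 = 2 by omega) with hm | hm | hm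
      · -- a % 3 = 0
        by_cases ha0 : a = 0
        · refine ⟨⟨n - 1, by omega⟩, mem_D hn _ _ (by omega), ?_, ?_⟩
          · have := cyc_adj_of hn a (n-1) ha (by omega) (by omega)
            exact this
          · unfold col
            simp only [Fin.val_mk]
            split_ifs <;> (try simp only [true_and] at *) <;> omega
        · refine ⟨⟨a - 1, by omega⟩, mem_D hn _ _ (by omega), ?_, ?_⟩
          · have := cyc_adj_of hn a (a-1) ha (by omega) (by omega)
            exact this
          · unfold col
            simp only [Fin.val_mk]
            split_ifs <;> (try simp only [true_and] at *) <;> omega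
      · -- a % 3 = 1
        refine ⟨⟨a + 1, by omega⟩, mem_D hn _ _ (by omega), ?_, ?_⟩
        · have := cyc_adj_of hn a (a+1) ha (by omega) (by omega)
          exact this
        · unfold col
          simp only [Fin.val_mk]
          split_ifs <;> (try simp only [true_and] at *) <;> omega
      · -- a % 3 = 2 : impossible
        omega
    · -- colors of D at least 1
      intro d hd
      rw [Finset.mem_image] at hd
      obtain ⟨j, hj, rfl⟩ := hd
      rw [Finset.mem_range] at hj
      unfold col gfin
      simp only [Fin.val_mk]
      split_ifs <;> omega
    · -- cardinality
      rw [Finset.card_image_of_injOn, Finset.card_range]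
      intro j1 hj1 j2 hj2 he
      rw [Finset.mem_coe, Finset.mem_range] at hj1 hj2
      rw [gfin, gfin, Fin.ext_iff] at he
      simp only [] at he
      split_ifs at he <;> omega
end

section
/- Let K_{r,s} be the complete bipartite graph with parts of sizes r and s, where r, s ≥ 2, and let c be any proper coloring of K_{r,s}. Then every up-color dominating c-set of K_{r,s} has at least 2 elements, and there exists an up-color dominating c-set of K_{r,s} with at most max{r, s} elements. -/
/-!
A single vertex `d` can only up-color dominate its neighbours, while in `K_{r,s}` with
`r, s ≥ 2` every vertex has a non-neighbour other than itself; so a dominating set needs two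
elements.

For the upper bound, let `x` be a vertex of maximal color and `v₀` a vertex of maximal color on
the other side, so `c v₀ < c x`. Send each vertex `u` on the side of `x` to itself if
`c v₀ < c u` and to `v₀` otherwise. The image is an up-color dominating set: `x` dominates the
other side, and a vertex of `x`'s side missing from the image was sent to `v₀`, so it has smaller
color than `v₀` by properness. Being the image of one side, it has at most `max r s` elements.
-/

open Finset

variable {V : Type*} {G : SimpleGraph V} {c : V → ℕ}

theorem IsUCDomSet.two_le_card [Nonempty V] {D : Finset V} (hG : ∀ d, ∃ v ≠ d, ¬G.Adj v d)
    (hD : IsUCDomSet G c D) : 2 ≤ #D := by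
  obtain ⟨d, hd⟩ : D.Nonempty := by
    obtain ⟨x⟩ := ‹Nonempty V›
    by_cases hx : x ∈ D
    · exact ⟨x, hx⟩
    · obtain ⟨d, hd, -⟩ := hD.1 x hx
      exact ⟨d, hd⟩
  obtain ⟨v, hvd, hnadj⟩ := hG d
  refine one_lt_card.2 ⟨d, hd, ?_⟩
  by_cases hv : v ∈ D
  · exact ⟨v, hv, hvd.symm⟩
  · obtain ⟨d', hd', hadj, -⟩ := hD.1 v hv
    exact ⟨d', hd', by rintro rfl; exact hnadj hadj⟩

theorem exists_isUCDomSet_card_le [DecidableEq V] (hc : ∀ ⦃u v⦄, G.Adj u v → c u ≠ c v)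
    (L : Finset V) {u₀ v₀ : V} (hu₀ : u₀ ∈ L) (hlt : c v₀ < c u₀) (hL : ∀ u ∈ L, G.Adj u v₀)
    (hadj : ∀ w ∉ L, G.Adj w u₀) (hle : ∀ w ∉ L, c w ≤ c v₀) :
    ∃ D, IsUCDomSet G c D ∧ #D ≤ #L := by
  set f : V → V := fun u ↦ if c v₀ < c u then u else v₀
  have hlt_of_le : ∀ u ∈ L, c u ≤ c v₀ → c u < c v₀ := fun u hu h ↦
    h.lt_of_ne (hc (hL u hu))
  refine ⟨L.image f, ⟨fun v hv ↦ ?_, fun d hd ↦ ?_⟩, card_image_le⟩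
  · by_cases hvL : v ∈ L
    · have hv₀ : ¬c v₀ < c v := fun h ↦ hv (mem_image.2 ⟨v, hvL, if_pos h⟩)
      exact ⟨v₀, mem_image.2 ⟨v, hvL, if_neg hv₀⟩, hL v hvL, hlt_of_le v hvL (not_lt.1 hv₀)⟩
    · exact ⟨u₀, mem_image.2 ⟨u₀, hu₀, if_pos hlt⟩, hadj v hvL, (hle v hvL).trans_lt hlt⟩
  · obtain ⟨u, hu, rfl⟩ := mem_image.1 hd
    by_cases h : c v₀ < c u
    · simpa only [f, if_pos h] using Nat.one_le_of_lt h
    · simpa only [f, if_neg h] using Nat.one_le_of_lt (hlt_of_le u hu (not_lt.1 h))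

section completeBipartiteGraph

variable {α β : Type*}

theorem completeBipartiteGraph_adj_iff_isLeft_ne {x y : α ⊕ β} :
    (completeBipartiteGraph α β).Adj x y ↔ x.isLeft ≠ y.isLeft := by
  cases x <;> cases y <;> simp

theorem completeBipartiteGraph_exists_ne_not_adj [Nontrivial α] [Nontrivial β] (x : α ⊕ β) :
    ∃ y ≠ x, ¬(completeBipartiteGraph α β).Adj y x := by
  rcases x with a | b
  · obtain ⟨a', ha'⟩ := exists_ne a
    exact ⟨.inl a', by simpa using ha', by simp⟩
  · obtain ⟨b', hb'⟩ := exists_ne b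
    exact ⟨.inr b', by simpa using hb', by simp⟩

theorem card_filter_isLeft_eq_le_max [Fintype α] [Fintype β] (b : Bool) :
    #{y : α ⊕ β | y.isLeft = b} ≤ max (Fintype.card α) (Fintype.card β) := by
  rw [card_filter, Fintype.sum_sum_type]
  cases b <;> simp

theorem completeBipartiteGraph_exists_isUCDomSet_card_le_max [Fintype α] [Fintype β]
    [Nonempty α] [Nonempty β] {c : α ⊕ β → ℕ}
    (hc : ∀ ⦃u v⦄, (completeBipartiteGraph α β).Adj u v → c u ≠ c v) :
    ∃ D, IsUCDomSet (completeBipartiteGraph α β) c D ∧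
      #D ≤ max (Fintype.card α) (Fintype.card β) := by
  classical
  obtain ⟨x, hx⟩ := Finite.exists_max c
  have hopp : ({y | y.isLeft ≠ x.isLeft} : Finset (α ⊕ β)).Nonempty := by
    rcases x with _ | _
    · exact ⟨.inr (Classical.arbitrary β), by simp⟩
    · exact ⟨.inl (Classical.arbitrary α), by simp⟩
  obtain ⟨v₀, hv₀, hv₀_max⟩ := exists_max_image _ c hopp
  replace hv₀ : v₀.isLeft ≠ x.isLeft := (mem_filter.1 hv₀).2
  have hv₀x : (completeBipartiteGraph α β).Adj v₀ x :=
    completeBipartiteGraph_adj_iff_isLeft_ne.2 hv₀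
  obtain ⟨D, hD, hcard⟩ := exists_isUCDomSet_card_le hc {y : α ⊕ β | y.isLeft = x.isLeft}
    (u₀ := x) (v₀ := v₀) (by simp) ((hx v₀).lt_of_ne (hc hv₀x))
    (fun u hu ↦ completeBipartiteGraph_adj_iff_isLeft_ne.2 <| by
      rw [(mem_filter.1 hu).2]; exact hv₀.symm)
    (fun w hw ↦ completeBipartiteGraph_adj_iff_isLeft_ne.2 <| by simpa using hw)
    (fun w hw ↦ hv₀_max w <| by simpa using hw)
  exact ⟨D, hD, hcard.trans (card_filter_isLeft_eq_le_max _)⟩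

end completeBipartiteGraph

theorem stmt_10 (r s : ℕ) (hr : 2 ≤ r) (hs : 2 ≤ s)
    (c : Fin r ⊕ Fin s → ℕ)
    (hc : ∀ ⦃u v⦄, (completeBipartiteGraph (Fin r) (Fin s)).Adj u v → c u ≠ c v) :
    (∀ D : Finset (Fin r ⊕ Fin s),
        IsUCDomSet (completeBipartiteGraph (Fin r) (Fin s)) c D → 2 ≤ D.card) ∧
      (∃ D : Finset (Fin r ⊕ Fin s),
        IsUCDomSet (completeBipartiteGraph (Fin r) (Fin s)) c D ∧ D.card ≤ max r s) := by
  have : Nontrivial (Fin r) := Fin.nontrivial_iff_two_le.2 hr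
  have : Nontrivial (Fin s) := Fin.nontrivial_iff_two_le.2 hs
  refine ⟨fun D hD ↦ hD.two_le_card completeBipartiteGraph_exists_ne_not_adj, ?_⟩
  simpa using completeBipartiteGraph_exists_isUCDomSet_card_le_max hc
end

section
/- Let K_{r,s} be the complete bipartite graph with parts A and B of sizes r ≥ 1 and s ≥ 1, and let c be a proper coloring of K_{r,s} using exactly two colors. Then the minimum cardinality of an up-color dominating c-set of K_{r,s} equals the number of vertices in the part that receives the larger of the two colors; in particular it lies in {r, s}. -/
open Finset

section UpColorDomination

variable {V : Type*} {G : SimpleGraph V} {c : V → ℕ}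

theorem IsUCDomSet.mem_of_forall_adj_le {D : Finset V} (hD : IsUCDomSet G c D) {v : V}
    (hv : ∀ w, G.Adj v w → c w ≤ c v) : v ∈ D := by
  by_contra hvD
  obtain ⟨d, -, hadj, hlt⟩ := hD.1 v hvD
  exact (hv d hadj).not_gt hlt

variable [Fintype V] {m : ℕ}

theorem IsUCDomSet.filter_eq_max_subset {D : Finset V} (hD : IsUCDomSet G c D)
    (hm : ∀ v, c v ≤ m) : univ.filter (c · = m) ⊆ D := by
  intro v hv
  rw [mem_filter] at hv
  exact hD.mem_of_forall_adj_le fun w _ => hv.2 ▸ hm w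

theorem isUCDomSet_filter_eq_max (hm : ∀ v, c v ≤ m) (hm1 : 1 ≤ m)
    (hdom : ∀ v, c v ≠ m → ∃ d, c d = m ∧ G.Adj v d) :
    IsUCDomSet G c (univ.filter (c · = m)) := by
  refine ⟨fun v hv => ?_, fun d hd => (mem_filter.1 hd).2 ▸ hm1⟩
  have hvm : c v ≠ m := fun h => hv (mem_filter.2 ⟨mem_univ v, h⟩)
  obtain ⟨d, hdm, hadj⟩ := hdom v hvm
  exact ⟨d, mem_filter.2 ⟨mem_univ d, hdm⟩, hadj, hdm ▸ lt_of_le_of_ne (hm v) hvm⟩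

end UpColorDomination

theorem eq_of_card_image_eq_two {V : Type*} [Fintype V] {c : V → ℕ} {x y v : V}
    (h2 : (univ.image c).card = 2) (hxy : c x ≠ c y) (hv : c v ≠ c y) : c v = c x := by
  have himg : univ.image c = {c x, c y} :=
    (eq_of_subset_of_card_le (by simp [insert_subset_iff])
      (by rw [h2, card_pair hxy])).symm
  have hmem : c v ∈ univ.image c := mem_image_of_mem c (mem_univ v)
  rw [himg, mem_insert, mem_singleton] at hmem
  exact hmem.resolve_right hv

section CompleteBipartite

variable {α β : Type*} {c : α ⊕ β → ℕ} {a b : ℕ}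
  (hA : ∀ i, c (.inl i) = a) (hB : ∀ j, c (.inr j) = b)
include hA hB

theorem completeBipartiteGraph_adj_of_color_ne {u v : α ⊕ β} (h : c u ≠ c v) :
    (completeBipartiteGraph α β).Adj u v := by
  rcases u with i | j <;> rcases v with i' | j' <;> simp_all

theorem card_filter_color_eq [Fintype α] [Fintype β] (x : ℕ) :
    (univ.filter (c · = x)).card =
      (if a = x then Fintype.card α else 0) + (if b = x then Fintype.card β else 0) := by
  rw [card_filter, Fintype.sum_sum_type]
  simp only [hA, hB, sum_const, card_univ, smul_eq_mul, mul_ite, mul_one, mul_zero]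

end CompleteBipartite

/-- In a proper two-coloring of `K_{r,s}` each part is monochromatic; the minimum size of an
up-color dominating `c`-set equals the size of the part receiving the larger color. -/
theorem stmt_11 (r s : ℕ) (hr : 1 ≤ r) (hs : 1 ≤ s)
    (c : Fin r ⊕ Fin s → ℕ)
    (hc : ∀ ⦃u v⦄, (completeBipartiteGraph (Fin r) (Fin s)).Adj u v → c u ≠ c v)
    (h2 : (Finset.univ.image c).card = 2) :
    (∃ D : Finset (Fin r ⊕ Fin s),
        IsUCDomSet (completeBipartiteGraph (Fin r) (Fin s)) c D ∧
          D.card = if c (Sum.inl ⟨0, hr⟩) < c (Sum.inr ⟨0, hs⟩) then s else r) ∧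
      (∀ D : Finset (Fin r ⊕ Fin s),
        IsUCDomSet (completeBipartiteGraph (Fin r) (Fin s)) c D →
          (if c (Sum.inl ⟨0, hr⟩) < c (Sum.inr ⟨0, hs⟩) then s else r) ≤ D.card) := by
  set a := c (Sum.inl ⟨0, hr⟩)
  set b := c (Sum.inr ⟨0, hs⟩)
  have hab : a ≠ b := hc (by simp)
  have hA : ∀ i, c (.inl i) = a := fun i => eq_of_card_image_eq_two h2 hab (hc (by simp))
  have hB : ∀ j, c (.inr j) = b := fun j => eq_of_card_image_eq_two h2 hab.symm (hc (by simp))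
  have hm : ∀ v, c v ≤ max a b := by rintro (i | j) <;> simp [hA, hB]
  have hcard : (univ.filter (c · = max a b)).card = if a < b then s else r := by
    rw [card_filter_color_eq hA hB, Fintype.card_fin, Fintype.card_fin]
    split_ifs <;> omega
  have hdom : ∀ v, c v ≠ max a b → ∃ d, c d = max a b ∧
      (completeBipartiteGraph (Fin r) (Fin s)).Adj v d := by
    intro v hv
    obtain ⟨d, hd⟩ : ∃ d, c d = max a b := (max_choice a b).elim
      (fun h => ⟨.inl ⟨0, hr⟩, h.symm⟩) (fun h => ⟨.inr ⟨0, hs⟩, h.symm⟩)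
    exact ⟨d, hd, completeBipartiteGraph_adj_of_color_ne hA hB (hd ▸ hv)⟩
  refine ⟨⟨_, isUCDomSet_filter_eq_max hm (by omega) hdom, hcard⟩, fun D hD => ?_⟩
  exact hcard ▸ card_le_card (hD.filter_eq_max_subset hm)
end

section
/- Let K_{r,s} be the complete bipartite graph with parts of sizes r and s, where r, s ≥ 3. Then: (a) every proper coloring c of K_{r,s} that admits an up-color dominating c-set of size 2 uses at least 3 colors; and (b) there exists a proper coloring c of K_{r,s} using exactly 3 colors that admits an up-color dominating c-set of size 2. -/
/-!
If each side of `K_{r,s}` has a vertex `a`, resp. `b`, outside the dominating set `D`, then `a` is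
dominated by some `j` on the other side and `b` by some `i` on the other side, with
`c a < c j` and `c b < c i`. Since `a b` and `i j` are edges, either `c a, c j, c b` are distinct,
or `c b = c j` and `c a < c j < c i`. A set of size 2 cannot contain a whole side of size at
least 3. Conversely, colour one left vertex `2`, the other left vertices `0` and the right side
`1`; that left vertex together with any right vertex dominates upwards.
-/

open Finset

variable {α β : Type*}

lemma Finset.exists_inl_notMem_of_card_lt [Fintype α] {D : Finset (α ⊕ β)}
    (h : #D < Fintype.card α) : ∃ a, .inl a ∉ D := by
  obtain ⟨a, -, ha⟩ := exists_mem_notMem_of_card_lt_card (s := D.toLeft) (t := univ)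
    (card_toLeft_le.trans_lt h)
  exact ⟨a, mem_toLeft.not.1 ha⟩

lemma Finset.exists_inr_notMem_of_card_lt [Fintype β] {D : Finset (α ⊕ β)}
    (h : #D < Fintype.card β) : ∃ b, .inr b ∉ D := by
  obtain ⟨b, -, hb⟩ := exists_mem_notMem_of_card_lt_card (s := D.toRight) (t := univ)
    (card_toRight_le.trans_lt h)
  exact ⟨b, mem_toRight.not.1 hb⟩

namespace IsUCDomSet

variable {c : α ⊕ β → ℕ} {D : Finset (α ⊕ β)}

lemma exists_inr_of_inl_notMem (hD : IsUCDomSet (completeBipartiteGraph α β) c D) {a : α}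
    (ha : .inl a ∉ D) : ∃ b, c (.inl a) < c (.inr b) := by
  obtain ⟨d | b, -, hadj, hlt⟩ := hD.1 _ ha
  · simp at hadj
  · exact ⟨b, hlt⟩

lemma exists_inl_of_inr_notMem (hD : IsUCDomSet (completeBipartiteGraph α β) c D) {b : β}
    (hb : .inr b ∉ D) : ∃ a, c (.inr b) < c (.inl a) := by
  obtain ⟨a | d, -, hadj, hlt⟩ := hD.1 _ hb
  · exact ⟨a, hlt⟩
  · simp at hadj

theorem three_le_card_image [Fintype α] [Fintype β]
    (hc : ∀ ⦃u v⦄, (completeBipartiteGraph α β).Adj u v → c u ≠ c v)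
    (hD : IsUCDomSet (completeBipartiteGraph α β) c D) {a : α} (ha : .inl a ∉ D) {b : β}
    (hb : .inr b ∉ D) : 3 ≤ #(univ.image c) := by
  obtain ⟨j, hj⟩ := hD.exists_inr_of_inl_notMem ha
  obtain ⟨i, hi⟩ := hD.exists_inl_of_inr_notMem hb
  have hab : c (.inl a) ≠ c (.inr b) := hc (by simp)
  have hij : c (.inl i) ≠ c (.inr j) := hc (by simp)
  have mem (x : α ⊕ β) : c x ∈ univ.image c := mem_image_of_mem c (mem_univ x)
  refine two_lt_card.2 ?_
  by_cases hbj : c (.inr b) = c (.inr j)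
  · exact ⟨_, mem (.inl a), _, mem (.inr j), _, mem (.inl i), by omega, by omega, by omega⟩
  · exact ⟨_, mem (.inl a), _, mem (.inr j), _, mem (.inr b), by omega, hab, Ne.symm hbj⟩

end IsUCDomSet

section PivotColoring

variable [DecidableEq α]

def pivotColoring (a₀ : α) : α ⊕ β → ℕ :=
  Sum.elim (fun a => if a = a₀ then 2 else 0) fun _ => 1

lemma pivotColoring_ne_of_adj (a₀ : α) :
    ∀ ⦃u v⦄, (completeBipartiteGraph α β).Adj u v → pivotColoring a₀ u ≠ pivotColoring a₀ v := by
  rintro (a | b) (a' | b') h <;> simp_all [pivotColoring] <;> split_ifs <;> simp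

lemma image_pivotColoring [Fintype α] [Fintype β] {a₀ a₁ : α} (h : a₁ ≠ a₀) (b₀ : β) :
    univ.image (pivotColoring (β := β) a₀) = {0, 1, 2} := by
  ext n
  simp only [mem_image, mem_univ, true_and, mem_insert, mem_singleton]
  constructor
  · rintro ⟨a | b, rfl⟩
    · by_cases ha : a = a₀ <;> simp [pivotColoring, ha]
    · simp [pivotColoring]
  · rintro (rfl | rfl | rfl)
    exacts [⟨.inl a₁, by simp [pivotColoring, h]⟩, ⟨.inr b₀, rfl⟩, ⟨.inl a₀, by simp [pivotColoring]⟩]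

lemma isUCDomSet_pivotColoring [DecidableEq β] (a₀ : α) (b₀ : β) :
    IsUCDomSet (completeBipartiteGraph α β) (pivotColoring a₀) {.inl a₀, .inr b₀} := by
  refine ⟨?_, by simp [pivotColoring]⟩
  rintro (a | b) hv
  · refine ⟨.inr b₀, by simp, by simp, ?_⟩
    have : a ≠ a₀ := by rintro rfl; simp at hv
    simp [pivotColoring, this]
  · exact ⟨.inl a₀, by simp, by simp, by simp [pivotColoring]⟩

end PivotColoring

theorem stmt_12 (r s : ℕ) (hr : 3 ≤ r) (hs : 3 ≤ s) :
    (∀ c : Fin r ⊕ Fin s → ℕ,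
      (∀ ⦃u v⦄, (completeBipartiteGraph (Fin r) (Fin s)).Adj u v → c u ≠ c v) →
      (∃ D : Finset (Fin r ⊕ Fin s),
        IsUCDomSet (completeBipartiteGraph (Fin r) (Fin s)) c D ∧ D.card = 2) →
      3 ≤ (Finset.univ.image c).card) ∧
    (∃ c : Fin r ⊕ Fin s → ℕ,
      (∀ ⦃u v⦄, (completeBipartiteGraph (Fin r) (Fin s)).Adj u v → c u ≠ c v) ∧
      (Finset.univ.image c).card = 3 ∧
      ∃ D : Finset (Fin r ⊕ Fin s),
        IsUCDomSet (completeBipartiteGraph (Fin r) (Fin s)) c D ∧ D.card = 2) := by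
  refine ⟨fun c hc ⟨D, hD, hcard⟩ => ?_, ?_⟩
  · obtain ⟨a, ha⟩ := D.exists_inl_notMem_of_card_lt (β := Fin s) (by rw [hcard, Fintype.card_fin]; omega)
    obtain ⟨b, hb⟩ := D.exists_inr_notMem_of_card_lt (α := Fin r) (by rw [hcard, Fintype.card_fin]; omega)
    exact hD.three_le_card_image hc ha hb
  · let a₀ : Fin r := ⟨0, by omega⟩
    let b₀ : Fin s := ⟨0, by omega⟩
    have h : (⟨1, by omega⟩ : Fin r) ≠ a₀ := by simp [a₀]
    refine ⟨pivotColoring a₀, pivotColoring_ne_of_adj a₀, by rw [image_pivotColoring h b₀]; rfl,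
      _, isUCDomSet_pivotColoring a₀ b₀, card_pair (by simp)⟩
end

section
/- Let T be a finite tree with at least 2 vertices and let c be a proper coloring of T. Then there exists an up-color dominating c-set D of T of minimum cardinality among all up-color dominating c-sets of T such that every vertex of D that is a leaf of T (i.e., has degree 1) is a local maximum for c. -/
/-!
Among the minimum up-color dominating sets choose one of maximal total color. If a leaf `d` of
such a set had its unique neighbor `u` of larger color, replacing `d` by `u` would keep the set
dominating: the only vertex that relied on `d` is `u` itself, and `d` is dominated by `u`. The new
set is then either smaller (if `u` was already in it) or of the same size and larger total color.
-/

section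

open Finset

variable {V : Type*}

lemma exists_isUCDomSet [Fintype V] (G : SimpleGraph V) (c : V → ℕ)
    (hc : ∀ ⦃u v⦄, G.Adj u v → c u ≠ c v) (hG : ∀ v, ∃ u, G.Adj v u) :
    ∃ D : Finset V, IsUCDomSet G c D := by
  classical
  refine ⟨univ.filter (1 ≤ c ·), fun v hv => ?_, fun d hd => (mem_filter.mp hd).2⟩
  have hv0 : c v = 0 := by simpa using hv
  obtain ⟨u, hvu⟩ := hG v
  have hu : c u ≠ 0 := hv0 ▸ (hc hvu).symm
  exact ⟨u, by simpa using Nat.one_le_iff_ne_zero.mpr hu, hvu, by omega⟩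

lemma IsUCDomSet.insert_erase_leaf [DecidableEq V] {G : SimpleGraph V} {c : V → ℕ}
    {D : Finset V} {d u : V} (hD : IsUCDomSet G c D) (hd : d ∈ D) (hdu : G.Adj d u)
    (hleaf : ∀ w, G.Adj d w → w = u) (hlt : c d < c u) :
    IsUCDomSet G c (insert u (D.erase d)) := by
  refine ⟨fun v hv => ?_, fun x hx => ?_⟩
  · simp only [mem_insert, mem_erase, not_or, not_and_or, not_not] at hv
    obtain ⟨hvu, hvd | hvD⟩ := hv
    · subst hvd
      exact ⟨u, mem_insert_self _ _, hdu, hlt⟩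
    obtain ⟨w, hwD, hvw, hcw⟩ := hD.1 v hvD
    have hwd : w ≠ d := by
      rintro rfl
      exact hvu (hleaf v hvw.symm)
    exact ⟨w, mem_insert_of_mem (mem_erase.mpr ⟨hwd, hwD⟩), hvw, hcw⟩
  · rcases mem_insert.mp hx with rfl | hx
    · exact (hD.2 d hd).trans hlt.le
    · exact hD.2 x (mem_of_mem_erase hx)

lemma Finset.exists_minCard_maxSum {α : Type*} [Fintype α] (P : Finset α → Prop)
    (f : α → ℕ) (h : ∃ s, P s) :
    ∃ s, P s ∧ (∀ t, P t → #s ≤ #t) ∧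
      ∀ t, P t → #t = #s → ∑ x ∈ t, f x ≤ ∑ x ∈ s, f x := by
  classical
  obtain ⟨s₀, hs₀, hmin⟩ :=
    (univ.filter P).exists_min_image card (by simpa [Finset.Nonempty] using h)
  obtain ⟨s, hs, hmax⟩ := (univ.filter (fun t => P t ∧ #t = #s₀)).exists_max_image
    (∑ x ∈ ·, f x) ⟨s₀, by simpa using hs₀⟩
  simp only [mem_filter, mem_univ, true_and] at hs₀ hmin hs hmax
  exact ⟨s, hs.1, fun t ht => hs.2 ▸ hmin t ht,
    fun t ht hts => hmax t ⟨ht, hts.trans hs.2⟩⟩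

end

theorem stmt_13 {V : Type*} [Fintype V] (T : SimpleGraph V) [DecidableRel T.Adj]
    (hT : T.IsTree) (hcard : 2 ≤ Fintype.card V)
    (c : V → ℕ) (hc : ∀ ⦃u v⦄, T.Adj u v → c u ≠ c v) :
    ∃ D : Finset V, IsUCDomSet T c D ∧
      (∀ D' : Finset V, IsUCDomSet T c D' → D.card ≤ D'.card) ∧
      ∀ v ∈ D, T.degree v = 1 → ∀ u, T.Adj v u → c u ≤ c v := by
  classical
  have : Nontrivial V := Fintype.one_lt_card_iff_nontrivial.mp hcard
  obtain ⟨D, hD, hmin, hmax⟩ := Finset.exists_minCard_maxSum (IsUCDomSet T c) c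
    (exists_isUCDomSet T c hc hT.connected.preconnected.exists_adj_of_nontrivial)
  refine ⟨D, hD, hmin, fun d hd hdeg u hdu => ?_⟩
  by_contra! hlt
  obtain ⟨u', -, huniq⟩ := T.degree_eq_one_iff_existsUnique_adj.mp hdeg
  have hleaf (w) (hw : T.Adj d w) : w = u := (huniq w hw).trans (huniq u hdu).symm
  have hD' := hD.insert_erase_leaf hd hdu hleaf hlt
  have huD : u ∉ D.erase d := by
    intro hu
    have := hmin _ hD'
    rw [Finset.insert_eq_of_mem hu] at this
    exact (Finset.card_erase_lt_of_mem hd).not_ge this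
  have hcard' : (insert u (D.erase d)).card = D.card := by
    rw [Finset.card_insert_of_notMem huD, Finset.card_erase_add_one hd]
  have := hmax _ hD' hcard'
  rw [Finset.sum_insert huD, ← Finset.add_sum_erase D c hd] at this
  omega
end

section
/- Let T be a finite tree with at least 2 vertices and let c be a proper coloring of T. Then there exists an up-color dominating c-set D of T of minimum cardinality among all up-color dominating c-sets of T such that for every vertex v in D, if v has a neighbor u in D with c(u) > c(v), then v has at least one neighbor w with c(w) < c(v). -/
theorem Finset.exists_forall_card_le {α : Type*} {P : Finset α → Prop} (h : ∃ s, P s) :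
    ∃ s, P s ∧ ∀ t, P t → s.card ≤ t.card := by
  obtain ⟨s, hs, hmin⟩ := (measure Finset.card).wf.has_min {s | P s} h
  exact ⟨s, hs, fun t ht => not_lt.1 (hmin t ht)⟩

namespace IsUCDomSet

variable {V : Type*} {G : SimpleGraph V} {c : V → ℕ}

theorem exists_of_forall_exists_adj [Fintype V] (hc : ∀ ⦃u v⦄, G.Adj u v → c u ≠ c v)
    (hadj : ∀ v, ∃ w, G.Adj v w) : ∃ D, IsUCDomSet G c D := by
  classical
  refine ⟨Finset.univ.filter (1 ≤ c ·), fun v hv => ?_, fun d hd => (Finset.mem_filter.1 hd).2⟩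
  have hv0 : c v = 0 := by simpa using hv
  obtain ⟨w, hvw⟩ := hadj v
  have hw0 : c w ≠ 0 := hv0 ▸ (hc hvw).symm
  exact ⟨w, by simpa using Nat.one_le_iff_ne_zero.2 hw0, hvw, by omega⟩

theorem erase [DecidableEq V] {D : Finset V} (hD : IsUCDomSet G c D) {u v : V} (hu : u ∈ D)
    (hvu : G.Adj v u) (hcvu : c v < c u) (hv : ∀ w, G.Adj v w → ¬ c w < c v) :
    IsUCDomSet G c (D.erase v) := by
  refine ⟨fun x hx => ?_, fun d hd => hD.2 d (Finset.mem_of_mem_erase hd)⟩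
  by_cases hxv : x = v
  · subst hxv
    exact ⟨u, Finset.mem_erase.2 ⟨hvu.ne', hu⟩, hvu, hcvu⟩
  · obtain ⟨d, hd, hxd, hcxd⟩ := hD.1 x fun h => hx (Finset.mem_erase.2 ⟨hxv, h⟩)
    refine ⟨d, Finset.mem_erase.2 ⟨?_, hd⟩, hxd, hcxd⟩
    rintro rfl
    exact hv x hxd.symm hcxd

theorem exists_adj_lt_of_card_le {D : Finset V} (hD : IsUCDomSet G c D)
    (hmin : ∀ D', IsUCDomSet G c D' → D.card ≤ D'.card) {v : V} (hv : v ∈ D)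
    (hup : ∃ u ∈ D, G.Adj v u ∧ c v < c u) : ∃ w, G.Adj v w ∧ c w < c v := by
  classical
  by_contra! hno
  obtain ⟨u, hu, hvu, hcvu⟩ := hup
  have := hmin _ (hD.erase hu hvu hcvu fun w hw => not_lt.2 (hno w hw))
  have := Finset.card_erase_lt_of_mem hv
  omega

end IsUCDomSet

theorem stmt_14 {V : Type*} [Fintype V] (T : SimpleGraph V)
    (hT : T.IsTree) (hcard : 2 ≤ Fintype.card V)
    (c : V → ℕ) (hc : ∀ ⦃u v⦄, T.Adj u v → c u ≠ c v) :
    ∃ D : Finset V, IsUCDomSet T c D ∧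
      (∀ D' : Finset V, IsUCDomSet T c D' → D.card ≤ D'.card) ∧
      ∀ v ∈ D, (∃ u ∈ D, T.Adj v u ∧ c v < c u) → ∃ w, T.Adj v w ∧ c w < c v := by
  have : Nontrivial V := Fintype.one_lt_card_iff_nontrivial.1 hcard
  have hadj := hT.connected.preconnected.exists_adj_of_nontrivial
  obtain ⟨D, hD, hmin⟩ :=
    Finset.exists_forall_card_le (IsUCDomSet.exists_of_forall_exists_adj hc hadj)
  exact ⟨D, hD, hmin, fun v hv hup => hD.exists_adj_lt_of_card_le hmin hv hup⟩
end

section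
/- Let G be a finite connected simple graph with at least 5 vertices. Then there exist a proper coloring c of G and an up-color dominating c-set D of G such that Σ_{v∈D} c(v) ≤ i(G)·χ(G), where i(G) is the independent domination number of G. -/
/-- The independent domination number of `G`: the minimum size of a dominating set
that is also an independent set. -/
noncomputable def indepDomNum (V : Type*) [Fintype V] (G : SimpleGraph V) : ℕ :=
  sInf {n | ∃ D : Finset V, IsDomSet G D ∧ (∀ u ∈ D, ∀ v ∈ D, ¬ G.Adj u v) ∧ D.card = n}

/-- The chromatic number of `G` (as a natural number). -/
noncomputable def chromNum {V : Type*} (G : SimpleGraph V) : ℕ :=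
  sInf {n | G.Colorable n}

lemma exists_indep_dom {V : Type*} [Fintype V] (G : SimpleGraph V)
    (hV : Nonempty V) :
    ∃ D : Finset V, IsDomSet G D ∧ (∀ u ∈ D, ∀ v ∈ D, ¬ G.Adj u v) := by
  classical
  -- take an independent set of maximum cardinality
  have hne : ((Finset.univ : Finset (Finset V)).filter
      (fun D => ∀ u ∈ D, ∀ v ∈ D, ¬ G.Adj u v)).Nonempty := by
    refine ⟨∅, ?_⟩
    simp
  obtain ⟨D, hD, hmax⟩ := Finset.exists_max_image _ Finset.card hne
  simp only [Finset.mem_filter, Finset.mem_univ, true_and] at hD hmax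
  refine ⟨D, ?_, hD⟩
  intro v hv
  by_contra h
  push_neg at h
  have hindep : ∀ u ∈ insert v D, ∀ w ∈ insert v D, ¬ G.Adj u w := by
    intro u hu w hw hadj
    rcases Finset.mem_insert.mp hu with hu | hu
    · rcases Finset.mem_insert.mp hw with hw | hw
      · rw [hu, hw] at hadj; exact G.loopless.irrefl _ hadj
      · exact h w hw (hu ▸ hadj)
    · rcases Finset.mem_insert.mp hw with hw | hw
      · exact h u hu (hw ▸ hadj).symm
      · exact hD u hu w hw hadj
  have := hmax (insert v D) hindep
  rw [Finset.card_insert_of_notMem hv] at this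
  omega

theorem stmt_17 {V : Type*} [Fintype V] (G : SimpleGraph V)
    (hconn : G.Connected) (hcard : 5 ≤ Fintype.card V) :
    ∃ c : V → ℕ, (∀ ⦃u v⦄, G.Adj u v → c u ≠ c v) ∧
      ∃ D : Finset V, IsUCDomSet G c D ∧
        ∑ v ∈ D, c v ≤ indepDomNum V G * chromNum G := by
  classical
  have hV : Nonempty V := Fintype.card_pos_iff.mp (by omega)
  -- a minimum independent dominating set
  obtain ⟨D0, hdom0, hind0⟩ := exists_indep_dom G hV
  have hSne : {n | ∃ D : Finset V, IsDomSet G D ∧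
      (∀ u ∈ D, ∀ v ∈ D, ¬ G.Adj u v) ∧ D.card = n}.Nonempty :=
    ⟨D0.card, D0, hdom0, hind0, rfl⟩
  obtain ⟨D, hdom, hind, hDcard⟩ := Nat.sInf_mem hSne
  -- an optimal coloring
  have hcolne : {n | G.Colorable n}.Nonempty := ⟨Fintype.card V, G.colorable_of_fintype⟩
  have hcol : G.Colorable (chromNum G) := Nat.sInf_mem hcolne
  set n := chromNum G with hn
  obtain ⟨C⟩ := hcol
  have hn1 : 1 ≤ n := by
    rcases Nat.eq_zero_or_pos n with h0 | h
    · rw [h0] at C; exact (C hV.some).elim0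
    · exact h
  refine ⟨fun v => if v ∈ D then n else (C v).val, ?_, D, ⟨?_, ?_⟩, ?_⟩
  · intro u v hadj
    by_cases hu : u ∈ D <;> by_cases hv : v ∈ D <;> simp [hu, hv]
    · exact absurd hadj (hind u hu v hv)
    · exact Nat.ne_of_gt (C v).isLt
    · exact Nat.ne_of_lt (C u).isLt
    · exact fun h => C.valid hadj (Fin.val_injective h)
  · intro v hv
    obtain ⟨d, hd, hadj⟩ := hdom v hv
    exact ⟨d, hd, hadj, by simp [hv, hd, (C v).isLt]⟩
  · intro d hd; simp [hd, hn1]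
  · have h1 : ∑ v ∈ D, (if v ∈ D then n else (C v).val) = D.card * n := by
      rw [Finset.sum_congr rfl (fun v hv => if_pos hv), Finset.sum_const, smul_eq_mul]
    rw [h1, hDcard]; exact le_rfl
end

section
/- Let G be a finite connected simple graph with n ≥ 5 vertices. Then 4·i(G)·χ(G) ≤ n², where i(G) is the independent domination number of G and χ(G) is the chromatic number of G. -/
/-!
Let `D` be a minimum independent dominating set, `i = |D| ≥ 2`, and suppose `χ > n - i`.
Then `G` has no `(n - i)`-colouring into the vertices outside `D`, which forces two things:
the complement of `D` is a clique (otherwise merge two non-adjacent outside vertices and give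
`D` the freed colour), and some `v ∈ D` is adjacent to every outside vertex (otherwise recolour
each vertex of `D` like one of its outside non-neighbours). A neighbour `w` of another `u ∈ D`
then dominates everything outside `D` and both `u` and `v`, so `w` together with the vertices
of `D` not adjacent to `w` is a smaller independent dominating set. Hence `i + χ ≤ n`, and
`4iχ ≤ (i + χ)² ≤ n²`; when `i ≤ 1` the bound is `4χ ≤ 4n ≤ n²`.
-/

open Finset SimpleGraph

section

variable {V : Type*} {G : SimpleGraph V}

lemma chromNum_le_of_colorable {m : ℕ} (h : G.Colorable m) : chromNum G ≤ m :=
  Nat.sInf_le h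

lemma colorable_card_of_forall_mem {α : Type*} (s : Finset α) (c : V → α)
    (hc : ∀ v, c v ∈ s) (hadj : ∀ a b, G.Adj a b → c a ≠ c b) : G.Colorable #s := by
  rw [← Fintype.card_coe]
  exact (Coloring.mk (fun v => (⟨c v, hc v⟩ : s))
    fun hab h => hadj _ _ hab (congrArg Subtype.val h)).colorable

variable [Fintype V]

lemma chromNum_le_card : chromNum G ≤ Fintype.card V :=
  chromNum_le_of_colorable G.selfColoring.colorable

lemma exists_isDomSet_and_indep (G : SimpleGraph V) :
    ∃ D : Finset V, IsDomSet G D ∧ ∀ u ∈ D, ∀ v ∈ D, ¬ G.Adj u v := by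
  classical
  obtain ⟨D, hD, hmax⟩ := (univ.filter fun D : Finset V => ∀ u ∈ D, ∀ v ∈ D, ¬ G.Adj u v)
    |>.exists_max_image card ⟨∅, by simp⟩
  simp only [mem_filter, mem_univ, true_and] at hD hmax
  refine ⟨D, fun v hv => ?_, hD⟩
  by_contra! hno
  have hins := hmax (insert v D) <| by
    simp only [mem_insert]
    rintro a (rfl | ha) b (rfl | hb)
    exacts [G.irrefl, hno b hb, fun h => hno a ha h.symm, hD a ha b hb]
  rw [card_insert_of_notMem hv] at hins
  omega

lemma exists_card_eq_indepDomNum (G : SimpleGraph V) :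
    ∃ D : Finset V, IsDomSet G D ∧ (∀ u ∈ D, ∀ v ∈ D, ¬ G.Adj u v) ∧
      #D = indepDomNum V G := by
  obtain ⟨D, hdom, hind⟩ := exists_isDomSet_and_indep G
  exact Nat.sInf_mem (s := {n | ∃ D : Finset V, IsDomSet G D ∧
    (∀ u ∈ D, ∀ v ∈ D, ¬ G.Adj u v) ∧ #D = n}) ⟨#D, D, hdom, hind, rfl⟩

lemma indepDomNum_le_card {D : Finset V} (hdom : IsDomSet G D)
    (hind : ∀ u ∈ D, ∀ v ∈ D, ¬ G.Adj u v) : indepDomNum V G ≤ #D :=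
  Nat.sInf_le ⟨D, hdom, hind, rfl⟩

variable [DecidableEq V] {D : Finset V}

lemma colorable_card_compl_of_not_isClique (hind : ∀ u ∈ D, ∀ v ∈ D, ¬ G.Adj u v)
    (hD : ¬ G.IsClique (Dᶜ : Finset V)) : G.Colorable #Dᶜ := by
  obtain ⟨x, hx, y, hy, hxy, hnadj⟩ : ∃ x ∉ D, ∃ y ∉ D, x ≠ y ∧ ¬ G.Adj x y := by
    simpa [IsClique, Set.Pairwise] using hD
  refine colorable_card_of_forall_mem _ (fun v => if v ∈ D then y else if v = y then x else v)
    (fun v => ?_) fun a b hab => ?_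
  · split_ifs with hvD <;> simp_all
  · have hne := hab.ne
    by_cases ha : a ∈ D <;> by_cases hb : b ∈ D
    · exact absurd hab (hind a ha b hb)
    all_goals
      simp only [ha, hb, if_true, if_false]
      split_ifs <;> grind [G.adj_symm]

lemma colorable_card_compl_of_forall_exists_not_adj (hind : ∀ u ∈ D, ∀ v ∈ D, ¬ G.Adj u v)
    (hD : ∀ v ∈ D, ∃ w ∉ D, ¬ G.Adj v w) : G.Colorable #Dᶜ := by
  choose f hfD hf using hD
  refine colorable_card_of_forall_mem _ (fun v => if h : v ∈ D then f v h else v)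
    (fun v => ?_) fun a b hab => ?_
  · split_ifs with hvD
    exacts [mem_compl.mpr (hfD v hvD), mem_compl.mpr hvD]
  · by_cases ha : a ∈ D <;> by_cases hb : b ∈ D
    · exact absurd hab (hind a ha b hb)
    · simp only [ha, hb, dif_pos, dif_neg, not_false_eq_true]
      exact fun h => hf a ha (h ▸ hab)
    · simp only [ha, hb, dif_pos, dif_neg, not_false_eq_true]
      exact fun h => hf b hb (h ▸ hab.symm)
    · simp only [ha, hb, dif_neg, not_false_eq_true]
      exact hab.ne

lemma indepDomNum_lt_card_of_isClique_compl (hind : ∀ u ∈ D, ∀ v ∈ D, ¬ G.Adj u v)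
    (hD : G.IsClique (Dᶜ : Finset V)) {u v w : V} (hu : u ∈ D) (hv : v ∈ D) (huv : u ≠ v)
    (huw : G.Adj u w) (hvw : G.Adj v w) : indepDomNum V G < #D := by
  classical
  have hw : w ∉ D := fun hw => hind u hu w hw huw
  set D' := insert w (D.filter fun x => ¬ G.Adj x w)
  have hD'ind : ∀ a ∈ D', ∀ b ∈ D', ¬ G.Adj a b := by
    simp only [D', mem_insert, mem_filter]
    rintro a (rfl | ⟨ha, haw⟩) b (rfl | ⟨hb, hbw⟩)
    exacts [G.irrefl, fun h => hbw h.symm, haw, hind a ha b hb]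
  have hD'dom : IsDomSet G D' := by
    intro z hz
    simp only [D', mem_insert, mem_filter, not_or, not_and, not_not] at hz
    refine ⟨w, mem_insert_self _ _, ?_⟩
    by_cases hzD : z ∈ D
    · exact hz.2 hzD
    · exact hD (by simpa using hzD) (by simpa using hw) hz.1
  have hpair : #{u, v} ≤ #(D.filter fun x => G.Adj x w) :=
    card_le_card (by simp [insert_subset_iff, hu, hv, huw, hvw])
  have hsplit := card_filter_add_card_filter_not (s := D) fun x => G.Adj x w
  rw [card_pair huv] at hpair
  have hD'card : #D' ≤ #(D.filter fun x => ¬ G.Adj x w) + 1 := card_insert_le _ _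
  have := indepDomNum_le_card hD'dom hD'ind
  omega

lemma indepDomNum_add_chromNum_le (hconn : G.Connected) (hi : 2 ≤ indepDomNum V G) :
    indepDomNum V G + chromNum G ≤ Fintype.card V := by
  obtain ⟨D, hdom, hind, hD⟩ := exists_card_eq_indepDomNum G
  by_contra! hlt
  have hcol : ¬ G.Colorable #Dᶜ := fun h => by
    have := chromNum_le_of_colorable h
    rw [card_compl] at this
    have := D.card_le_univ
    omega
  have hclique : G.IsClique (Dᶜ : Finset V) := by
    by_contra h
    exact hcol (colorable_card_compl_of_not_isClique hind h)
  obtain ⟨v, hv, hvall⟩ : ∃ v ∈ D, ∀ w ∉ D, G.Adj v w := by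
    by_contra! h
    exact hcol (colorable_card_compl_of_forall_exists_not_adj hind h)
  obtain ⟨u, hu, huv⟩ := D.exists_mem_ne (by omega) v
  have : Nontrivial V := nontrivial_of_ne u v huv
  obtain ⟨w, huw⟩ := hconn.preconnected.exists_adj_of_nontrivial u
  have hvw := hvall w fun hw => hind u hu w hw huw
  have := indepDomNum_lt_card_of_isClique_compl hind hclique hu hv huv huw hvw
  omega

end

theorem stmt_18 {V : Type*} [Fintype V] (G : SimpleGraph V)
    (hconn : G.Connected) (hcard : 5 ≤ Fintype.card V) :
    4 * indepDomNum V G * chromNum G ≤ Fintype.card V ^ 2 := by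
  classical
  have hχ : chromNum G ≤ Fintype.card V := chromNum_le_card
  rcases le_or_gt (indepDomNum V G) 1 with hi | hi
  · calc 4 * indepDomNum V G * chromNum G ≤ 4 * 1 * Fintype.card V := by gcongr
      _ ≤ Fintype.card V ^ 2 := by nlinarith
  · have hsum := indepDomNum_add_chromNum_le hconn hi
    calc 4 * indepDomNum V G * chromNum G ≤ (indepDomNum V G + chromNum G) ^ 2 := by
          nlinarith [sq_nonneg ((indepDomNum V G : ℤ) - chromNum G)]
      _ ≤ Fintype.card V ^ 2 := by gcongr
end
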